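/- arXiv:0706.2901 — 6 statements merged into one kernel-verified Lean document; each statement's English description precedes it below -/
import Mathlib

section
/- Let n ≥ 1 and let F be an n×n real matrix. If there exist an n×n real matrix H of rank 1 and a real number α such that F + αH is Hurwitz, then every complex eigenvalue λ of F with Re(λ) ≥ 0 has geometric multiplicity at most 1. -/
open Matrix

/-- A real square matrix is Hurwitz (stable) if every complex eigenvalue has
negative real part. -/
def IsHurwitz {n : ℕ} (M : Matrix (Fin n) (Fin n) ℝ) : Prop :=
  ∀ μ : ℂ, Module.End.HasEigenvalue
    (Matrix.toLin' (M.map (Complex.ofReal : ℝ → ℂ))) μ → μ.re < 0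

/-- The geometric multiplicity of `μ` as a (complex) eigenvalue of the real matrix `F`:
the dimension over `ℂ` of the kernel of `F - μ I`. -/
noncomputable def geomMult {n : ℕ} (F : Matrix (Fin n) (Fin n) ℝ) (μ : ℂ) : ℕ :=
  Module.finrank ℂ (Module.End.eigenspace
    (Matrix.toLin' (F.map (Complex.ofReal : ℝ → ℂ))) μ)

/-!
On `ker g` the endomorphisms `f` and `f + g` agree, and when `rank g` is smaller than the
geometric multiplicity of `μ` the eigenspace of `f` for `μ` must meet `ker g` nontrivially, so `μ`
stays an eigenvalue of `f + g`. Complexification preserves rank, so `α H` is such a perturbation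
for every eigenvalue of `F` of geometric multiplicity at least two; that eigenvalue remains one of
the Hurwitz matrix `F + α H`, hence has negative real part.
-/

namespace Matrix

variable {m : Type*} [Fintype m] [DecidableEq m]

theorem rank_eq_of_mul_mul_eq {R : Type*} [CommRing R] {V M U N : Matrix m m R}
    (hV : IsUnit V) (hU : IsUnit U) (h : V * M * U = N) : M.rank = N.rank := by
  rw [← h, rank_mul_eq_left_of_isUnit_det _ _ ((isUnit_iff_isUnit_det U).mp hU),
    rank_mul_eq_right_of_isUnit_det _ _ ((isUnit_iff_isUnit_det V).mp hV)]

theorem exists_isUnit_mul_mul_eq_diagonal {R : Type*} [Field R] (M : Matrix m m R) :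
    ∃ V U : Matrix m m R, ∃ w : m → R, IsUnit V ∧ IsUnit U ∧ V * M * U = diagonal w := by
  obtain ⟨V, U, e, hV, hU, hVMU⟩ := exists_rank_normal_form M
  rw [← diagonal_one, ← diagonal_zero, fromBlocks_diagonal, submatrix_diagonal_equiv] at hVMU
  exact ⟨V, U, _, hV, hU, hVMU⟩

theorem rank_map_ringHom {K L : Type*} [Field K] [Field L] (f : K →+* L) (M : Matrix m m K) :
    (M.map f).rank = M.rank := by
  classical
  obtain ⟨V, U, w, hV, hU, hVMU⟩ := exists_isUnit_mul_mul_eq_diagonal M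
  have hmap : V.map f * M.map f * U.map f = diagonal fun i => f (w i) := by
    simpa using congrArg f.mapMatrix hVMU
  rw [rank_eq_of_mul_mul_eq (hV.map f.mapMatrix) (hU.map f.mapMatrix) hmap,
    rank_eq_of_mul_mul_eq hV hU hVMU, rank_diagonal, rank_diagonal]
  simp only [map_ne_zero]

end Matrix

namespace Module.End

theorem eigenspace_inf_ker_le_eigenspace_add {R M : Type*} [CommRing R] [AddCommGroup M]
    [Module R M] (f g : End R M) (μ : R) :
    f.eigenspace μ ⊓ LinearMap.ker g ≤ (f + g).eigenspace μ := by
  intro v ⟨hf, hg⟩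
  rw [SetLike.mem_coe, mem_eigenspace_iff] at hf
  rw [SetLike.mem_coe, LinearMap.mem_ker] at hg
  rw [mem_eigenspace_iff, LinearMap.add_apply, hf, hg, add_zero]

theorem hasEigenvalue_add_of_finrank_range_lt {K V : Type*} [Field K] [AddCommGroup V]
    [Module K V] [FiniteDimensional K V] {f g : End K V} {μ : K}
    (h : finrank K (LinearMap.range g) < finrank K (f.eigenspace μ)) :
    (f + g).HasEigenvalue μ := by
  have hrank := LinearMap.finrank_range_add_finrank_ker g
  have hdim := Submodule.finrank_sup_add_finrank_inf_eq (f.eigenspace μ) (LinearMap.ker g)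
  have hsup := Submodule.finrank_le (f.eigenspace μ ⊔ LinearMap.ker g)
  have hinf : f.eigenspace μ ⊓ LinearMap.ker g ≠ ⊥ := by
    rw [Ne, ← Submodule.finrank_eq_zero]
    omega
  exact hasEigenvalue_iff.mpr <|
    ne_bot_of_le_ne_bot hinf (eigenspace_inf_ker_le_eigenspace_add f g μ)

end Module.End

theorem geomMult_le_one_of_rank_one_stabilizable_general
    (n : ℕ) (F : Matrix (Fin n) (Fin n) ℝ)
    (h : ∃ (H : Matrix (Fin n) (Fin n) ℝ) (α : ℝ), H.rank = 1 ∧ IsHurwitz (F + α • H)) :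
    ∀ μ : ℂ,
      Module.End.HasEigenvalue (Matrix.toLin' (F.map (Complex.ofReal : ℝ → ℂ))) μ →
      0 ≤ μ.re → geomMult F μ ≤ 1 := by
  intro μ _ hre
  obtain ⟨H, α, hH, hHur⟩ := h
  by_contra! hgt
  refine (hHur μ ?_).not_ge hre
  have hsplit : toLin' ((F + α • H).map Complex.ofReal) =
      toLin' (F.map Complex.ofReal) + (α : ℂ) • toLin' (H.map Complex.ofReal) := by
    ext
    simp [Matrix.map_add, Matrix.map_smul]
  rw [hsplit]
  refine Module.End.hasEigenvalue_add_of_finrank_range_lt ?_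
  calc Module.finrank ℂ (LinearMap.range ((α : ℂ) • toLin' (H.map Complex.ofReal)))
      ≤ (H.map Complex.ofReal).rank := Submodule.finrank_mono (LinearMap.range_smul_le_range _ _)
    _ = H.rank := rank_map_ringHom Complex.ofRealHom H
    _ < geomMult F μ := hH ▸ hgt

/-- If `F + α H` is Hurwitz for some rank-one real matrix `H` and some real
`α`, then every complex eigenvalue of `F` with nonnegative real part has geometric
multiplicity at most one. -/
theorem geomMult_le_one_of_rank_one_stabilizable
    (n : ℕ) (hn : 1 ≤ n) (F : Matrix (Fin n) (Fin n) ℝ)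
    (h : ∃ (H : Matrix (Fin n) (Fin n) ℝ) (α : ℝ), H.rank = 1 ∧ IsHurwitz (F + α • H)) :
    ∀ μ : ℂ,
      Module.End.HasEigenvalue (Matrix.toLin' (F.map (Complex.ofReal : ℝ → ℂ))) μ →
      0 ≤ μ.re → geomMult F μ ≤ 1 :=
  geomMult_le_one_of_rank_one_stabilizable_general n F h
end

section
/- Let n ≥ 1, let F be an n×n real matrix, and let b ∈ ℝⁿ be a column vector. Suppose there exists a symmetric positive definite n×n real matrix P such that F·P + P·Fᵀ − 2·b·bᵀ is negative definite. Then, with k = bᵀ·P⁻¹, the matrix F + α·b·k is Hurwitz for every real α ≤ −1. -/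
/-!
Let `μ` be a complex eigenvalue of `A` with eigenvector `v`, and write `v = P u`. Since `P` is
Hermitian, `uᴴ (A P + P Aᴴ) u = μ (uᴴ P u) + conj (μ (uᴴ P u)) = 2 Re μ · uᴴ P u`; as `uᴴ P u > 0`,
negative definiteness of `A P + P Aᴴ` forces `Re μ < 0`. Both definiteness hypotheses pass from `ℝ`
to `ℂ` because a real positive definite matrix is a Gram matrix `Bᵀ B`.

For the feedback `A = F + α b k` with `k = bᵀ P⁻¹` we have `b k P = b bᵀ`, so
`A P + P Aᵀ = F P + P Fᵀ + 2 α b bᵀ`, which differs from `F P + P Fᵀ - 2 b bᵀ` by the negative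
semidefinite matrix `2 (α + 1) b bᵀ` when `α ≤ -1`.
-/

open Matrix

open scoped ComplexOrder

section

variable {ι : Type*} [Fintype ι]

open scoped MatrixOrder in
theorem Matrix.PosDef.map_ofReal {M : Matrix ι ι ℝ} (hM : M.PosDef) :
    (M.map Complex.ofReal).PosDef := by
  classical
  obtain ⟨B, rfl⟩ := CStarAlgebra.nonneg_iff_eq_star_mul_self.mp hM.posSemidef.nonneg
  have hB : (star B * B).map Complex.ofReal = (B.map Complex.ofReal)ᴴ * B.map Complex.ofReal := by
    rw [star_eq_conjTranspose, ← conjTranspose_map _ fun r => (Complex.conj_ofReal r).symm]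
    exact Matrix.map_mul (f := Complex.ofRealHom)
  have hpsd : ((star B * B).map Complex.ofReal).PosSemidef :=
    hB ▸ posSemidef_conjTranspose_mul_self _
  exact hpsd.posDef_iff_isUnit.mpr (hM.isUnit.map Complex.ofRealHom.mapMatrix)

theorem Matrix.star_dotProduct_conjTranspose_mulVec {α : Type*} [NonUnitalSemiring α] [StarRing α]
    (M : Matrix ι ι α) (x y : ι → α) : star x ⬝ᵥ Mᴴ *ᵥ y = star (star y ⬝ᵥ M *ᵥ x) := by
  rw [dotProduct_mulVec, ← star_mulVec, star_dotProduct]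

theorem Matrix.eigenvalue_re_lt_zero_of_lyapunov {A P : Matrix ι ι ℂ} (hP : P.PosDef)
    (hQ : (-(A * P + P * Aᴴ)).PosDef) {μ : ℂ} {v : ι → ℂ} (hv : A *ᵥ v = μ • v) (hv0 : v ≠ 0) :
    μ.re < 0 := by
  classical
  obtain ⟨u, rfl⟩ := mulVec_surjective_iff_isUnit.mpr hP.isUnit v
  have hu0 : u ≠ 0 := by rintro rfl; simp at hv0
  set t := star u ⬝ᵥ P *ᵥ u
  have hPA : P * Aᴴ = (A * P)ᴴ := by rw [conjTranspose_mul, hP.isHermitian.eq]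
  have hform : star u ⬝ᵥ (A * P + P * Aᴴ) *ᵥ u = μ * t + star (μ * t) := by
    rw [hPA, add_mulVec, dotProduct_add, star_dotProduct_conjTranspose_mulVec, ← mulVec_mulVec,
      hv, dotProduct_smul, smul_eq_mul]
  have ht : 0 < t := hP.dotProduct_mulVec_pos hu0
  obtain ⟨ht_re, ht_im⟩ := Complex.pos_iff.mp ht
  have hQu := (Complex.pos_iff.mp (hQ.dotProduct_mulVec_pos hu0)).1
  rw [neg_mulVec, dotProduct_neg, hform, Complex.star_def, Complex.add_conj] at hQu
  simp only [Complex.neg_re, Complex.ofReal_re, Complex.mul_re, ← ht_im] at hQu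
  nlinarith

theorem Matrix.vecMulVec_vecMul_inv_mul {R : Type*} [CommRing R] [DecidableEq ι] {P : Matrix ι ι R}
    (hP : IsUnit P) (b c : ι → R) : vecMulVec b (c ᵥ* P⁻¹) * P = vecMulVec b c := by
  rw [vecMulVec_mul, vecMul_vecMul, nonsing_inv_mul _ ((isUnit_iff_isUnit_det P).mp hP),
    vecMul_one]

theorem Matrix.lyapunov_add_smul_vecMulVec_vecMul_inv {R : Type*} [CommRing R] [DecidableEq ι]
    {P : Matrix ι ι R} (hPs : P.IsSymm) (hPu : IsUnit P) (F : Matrix ι ι R) (b : ι → R) (α : R) :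
    (F + α • vecMulVec b (b ᵥ* P⁻¹)) * P + P * (F + α • vecMulVec b (b ᵥ* P⁻¹))ᵀ
      = F * P + P * Fᵀ + (2 * α) • vecMulVec b b := by
  have h := vecMulVec_vecMul_inv_mul hPu b b
  have hT : P * (vecMulVec b (b ᵥ* P⁻¹))ᵀ = vecMulVec b b := by
    rw [← hPs.eq, ← transpose_mul, hPs.eq, h, transpose_vecMulVec]
  rw [add_mul, transpose_add, mul_add, transpose_smul, Matrix.smul_mul, Matrix.mul_smul, h, hT]
  module

end

theorem isHurwitz_of_lyapunov {n : ℕ} {A P : Matrix (Fin n) (Fin n) ℝ} (hP : P.PosDef)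
    (hQ : (-(A * P + P * Aᵀ)).PosDef) : IsHurwitz A := by
  intro μ hμ
  obtain ⟨v, hv⟩ := hμ.exists_hasEigenvector
  have hQc : (-(A.map Complex.ofReal * P.map Complex.ofReal
      + P.map Complex.ofReal * (A.map Complex.ofReal)ᴴ)).PosDef := by
    convert hQ.map_ofReal using 1
    ext i j
    simp [mul_apply]
  exact eigenvalue_re_lt_zero_of_lyapunov hP.map_ofReal hQc (by simpa using hv.apply_eq_smul) hv.2

theorem hurwitz_of_lyapunov_ineq_general
    (n : ℕ) (F : Matrix (Fin n) (Fin n) ℝ) (b : Fin n → ℝ)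
    (P : Matrix (Fin n) (Fin n) ℝ) (hP : P.PosDef)
    (hneg : (-(F * P + P * Fᵀ - (2 : ℝ) • Matrix.vecMulVec b b)).PosDef) :
    ∀ α : ℝ, α ≤ -1 →
      IsHurwitz (F + α • Matrix.vecMulVec b (Matrix.vecMul b P⁻¹)) := by
  intro α hα
  refine isHurwitz_of_lyapunov hP ?_
  rw [lyapunov_add_smul_vecMulVec_vecMul_inv (isHermitian_iff_isSymm.mp hP.isHermitian) hP.isUnit]
  have hbb : ((-(2 * α + 2)) • vecMulVec b b).PosSemidef :=
    (posSemidef_vecMulVec_self_star b).smul (by linarith)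
  convert hneg.add_posSemidef hbb using 1
  module

/-- If `P` is symmetric positive definite and `F P + P Fᵀ - 2 b bᵀ` is
negative definite, then with `k = bᵀ P⁻¹` the matrix `F + α b k` is Hurwitz for every
`α ≤ -1`. -/
theorem hurwitz_of_lyapunov_ineq
    (n : ℕ) (hn : 1 ≤ n) (F : Matrix (Fin n) (Fin n) ℝ) (b : Fin n → ℝ)
    (P : Matrix (Fin n) (Fin n) ℝ) (hP : P.PosDef)
    (hneg : (-(F * P + P * Fᵀ - (2 : ℝ) • Matrix.vecMulVec b b)).PosDef) :
    ∀ α : ℝ, α ≤ -1 →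
      IsHurwitz (F + α • Matrix.vecMulVec b (Matrix.vecMul b P⁻¹)) :=
  hurwitz_of_lyapunov_ineq_general n F b P hP hneg
end

section
/- Let n ≥ 1, let Q be a symmetric n×n real matrix and let b ∈ ℝⁿ be a column vector. Then there exists a column vector y ∈ ℝⁿ such that Q − b·yᵀ − y·bᵀ is negative definite if, and only if, there exists a real scalar β > 0 such that Q − β·b·bᵀ is negative definite. -/
/-!
If `N := -(Q - b yᵀ - y bᵀ)` is positive definite, completing the square in `b` gives
`-(Q - β b bᵀ) = (N - β⁻¹ y yᵀ) + β⁻¹ (β b - y)(β b - y)ᵀ`. The Cauchy–Schwarz inequality for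
the inner product defined by `N`, applied to `x` and `N⁻¹y`, gives `(xᵀy)² ≤ (xᵀNx)(yᵀN⁻¹y)`, so `N - β⁻¹ y yᵀ` is positive
definite as soon as `β > yᵀN⁻¹y`. Conversely, `y = (β/2) b` turns `Q - b yᵀ - y bᵀ` into
`Q - β b bᵀ`.
-/

open Matrix

namespace Matrix

variable {ι : Type*} [Fintype ι] [DecidableEq ι]

theorem PosDef.sq_dotProduct_le {N : Matrix ι ι ℝ} (hN : N.PosDef) (x y : ι → ℝ) :
    (x ⬝ᵥ y) ^ 2 ≤ (x ⬝ᵥ N *ᵥ x) * (y ⬝ᵥ N⁻¹ *ᵥ y) := by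
  set z := N⁻¹ *ᵥ y
  have hNz : N *ᵥ z = y := by
    rw [mulVec_mulVec, mul_nonsing_inv _ ((isUnit_iff_isUnit_det N).mp hN.isUnit), one_mulVec]
  have hzN : z ᵥ* N = y := by
    rw [← mulVec_transpose, ← conjTranspose_eq_transpose_of_trivial, hN.isHermitian.eq, hNz]
  have hcs := (toBilin' N).apply_mul_apply_le_of_forall_zero_le
    (fun v ↦ by simpa [toBilin'_apply'] using hN.posSemidef.dotProduct_mulVec_nonneg v) x z
  simp only [toBilin'_apply', hNz] at hcs
  rwa [dotProduct_mulVec z, hzN, dotProduct_comm y, ← sq, dotProduct_comm z] at hcs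

theorem PosDef.sub_smul_vecMulVec_self {N : Matrix ι ι ℝ} (hN : N.PosDef) (y : ι → ℝ) {t : ℝ}
    (ht₀ : 0 ≤ t) (ht : t * (y ⬝ᵥ N⁻¹ *ᵥ y) < 1) : (N - t • vecMulVec y y).PosDef := by
  have hyy : (vecMulVec y y).IsHermitian := by
    simpa using (posSemidef_vecMulVec_self_star y).isHermitian
  refine .of_dotProduct_mulVec_pos (hN.isHermitian.sub (hyy.smul (.all t))) fun x hx ↦ ?_
  have hNx : 0 < x ⬝ᵥ N *ᵥ x := by simpa using hN.dotProduct_mulVec_pos hx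
  rw [star_trivial, sub_mulVec, dotProduct_sub, smul_mulVec, dotProduct_smul, vecMulVec_mulVec,
    op_smul_eq_smul, dotProduct_smul, smul_eq_mul, smul_eq_mul, dotProduct_comm y x, sub_pos, ← sq]
  calc t * (x ⬝ᵥ y) ^ 2 ≤ t * ((x ⬝ᵥ N *ᵥ x) * (y ⬝ᵥ N⁻¹ *ᵥ y)) := by
        gcongr; exact hN.sq_dotProduct_le x y
    _ = t * (y ⬝ᵥ N⁻¹ *ᵥ y) * (x ⬝ᵥ N *ᵥ x) := by ring
    _ < x ⬝ᵥ N *ᵥ x := mul_lt_of_lt_one_left hNx ht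

end Matrix

theorem projection_lemma_general
    (n : ℕ) (Q : Matrix (Fin n) (Fin n) ℝ) (b : Fin n → ℝ) :
    (∃ y : Fin n → ℝ,
        (-(Q - Matrix.vecMulVec b y - Matrix.vecMulVec y b)).PosDef) ↔
    (∃ β : ℝ, 0 < β ∧ (-(Q - β • Matrix.vecMulVec b b)).PosDef) := by
  constructor
  · rintro ⟨y, hN⟩
    set N := -(Q - vecMulVec b y - vecMulVec y b)
    set β := y ⬝ᵥ N⁻¹ *ᵥ y + 1
    have hc : 0 ≤ y ⬝ᵥ N⁻¹ *ᵥ y := by simpa using hN.inv.posSemidef.dotProduct_mulVec_nonneg y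
    have hβ : 0 < β := by positivity
    refine ⟨β, hβ, ?_⟩
    have hsq : -(Q - β • vecMulVec b b) =
        (N - β⁻¹ • vecMulVec y y) + β⁻¹ • vecMulVec (β • b - y) (β • b - y) := by
      ext i j
      simp only [N, Matrix.neg_apply, Matrix.sub_apply, Matrix.add_apply, Matrix.smul_apply, vecMulVec_apply,
        Pi.sub_apply, Pi.smul_apply, smul_eq_mul]
      field_simp
      ring
    rw [hsq]
    refine (hN.sub_smul_vecMulVec_self y (inv_nonneg.mpr hβ.le) ?_).add_posSemidef
      ((posSemidef_vecMulVec_self_star _).smul (inv_nonneg.mpr hβ.le))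
    rw [inv_mul_lt_one₀ hβ]
    linarith
  · rintro ⟨β, -, hpd⟩
    refine ⟨(β / 2) • b, ?_⟩
    rwa [vecMulVec_smul, smul_vecMulVec, sub_sub, ← add_smul, add_halves]

/-- elimination/projection lemma: For a symmetric real matrix `Q` and a
vector `b`, there is a vector `y` with `Q - b yᵀ - y bᵀ` negative definite iff there is
a scalar `β > 0` with `Q - β b bᵀ` negative definite. -/
theorem projection_lemma
    (n : ℕ) (hn : 1 ≤ n) (Q : Matrix (Fin n) (Fin n) ℝ) (hQ : Q.IsSymm) (b : Fin n → ℝ) :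
    (∃ y : Fin n → ℝ,
        (-(Q - Matrix.vecMulVec b y - Matrix.vecMulVec y b)).PosDef) ↔
    (∃ β : ℝ, 0 < β ∧ (-(Q - β • Matrix.vecMulVec b b)).PosDef) :=
  projection_lemma_general n Q b
end

section
/- Let G be a finite simple graph on N ≥ 2 vertices. Then N is an eigenvalue of the Laplacian matrix L(G) if, and only if, the complement graph Gᶜ is disconnected. -/
open Matrix Polynomial

/-- The real Laplacian matrix of a simple graph on `Fin N`. -/
noncomputable def lapR {N : ℕ} (G : SimpleGraph (Fin N)) : Matrix (Fin N) (Fin N) ℝ :=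
  letI := Classical.decRel G.Adj
  G.lapMatrix ℝ

/-- The Laplacian eigenvalues of a simple graph on `Fin N`, listed in nondecreasing order
with multiplicity; `sortedLapEigs G i` is the `(i+1)`-st smallest Laplacian eigenvalue. -/
noncomputable def sortedLapEigs {N : ℕ} (G : SimpleGraph (Fin N)) : Fin N → ℝ :=
  letI := Classical.decRel G.Adj
  let f : Fin N → ℝ := (SimpleGraph.posSemidef_lapMatrix ℝ G).isHermitian.eigenvalues
  f ∘ Tuple.sort f

/-!
Since `L(G) + L(Gᶜ) = L(K_N) = N • 1 - J` with `J` the all-ones matrix, `L(G) x = N x` says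
`L(Gᶜ) x = -(∑ x) • 𝟙`. Pairing with `x` and using that `L(Gᶜ)` is positive semidefinite gives
`∑ x = 0`, hence `L(Gᶜ) x = 0`. So `N` is an eigenvalue iff `L(Gᶜ)` has a nonzero kernel vector
of zero sum. On a connected graph kernel vectors are constant, so none exists; if `Gᶜ` has a
component `C ≠ V`, then `N • 𝟙_C - |C| • 𝟙` is one.
-/

theorem Matrix.hasEigenvalue_toLin'_iff {n R : Type*} [Fintype n] [DecidableEq n] [CommRing R]
    (A : Matrix n n R) (μ : R) :
    Module.End.HasEigenvalue (toLin' A) μ ↔ ∃ x ≠ 0, A *ᵥ x = μ • x := by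
  simp only [Module.End.hasEigenvalue_iff, Submodule.ne_bot_iff, Module.End.mem_eigenspace_iff,
    toLin'_apply, and_comm]

namespace SimpleGraph

variable {V : Type*} [Fintype V] [DecidableEq V] (G : SimpleGraph V) [DecidableRel G.Adj]

theorem degMatrix_add_degMatrix_compl (R : Type*) [AddMonoidWithOne R] :
    G.degMatrix R + Gᶜ.degMatrix R = (completeGraph V).degMatrix R := by
  simp only [degMatrix, diagonal_add, complete_graph_degree, degree_compl]
  congr 1
  funext v
  have := G.degree_lt_card_verts v
  rw [← Nat.cast_add]
  congr 1
  omega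

theorem lapMatrix_add_lapMatrix_compl (R : Type*) [AddCommGroupWithOne R] :
    G.lapMatrix R + Gᶜ.lapMatrix R = (completeGraph V).lapMatrix R := by
  rw [lapMatrix, lapMatrix, lapMatrix, ← degMatrix_add_degMatrix_compl G,
    ← IsCompl.adjMatrix_add_adjMatrix_eq_adjMatrix_completeGraph R (isCompl_compl : IsCompl G Gᶜ)]
  abel

theorem lapMatrix_completeGraph_mulVec {R : Type*} [Ring R] (x : V → R) :
    (completeGraph V).lapMatrix R *ᵥ x = (Fintype.card V : R) • x - fun _ ↦ ∑ v, x v := by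
  funext v
  have hcard : 1 ≤ Fintype.card V := Fintype.card_pos_iff.mpr ⟨v⟩
  rw [lapMatrix_mulVec_apply, neighborFinset_top, ← Finset.sum_compl_add_sum {v} x,
    complete_graph_degree, Nat.cast_sub hcard]
  simp only [Finset.sum_singleton, Pi.sub_apply, Pi.smul_apply, smul_eq_mul, Nat.cast_one]
  rw [sub_mul, one_mul]
  abel

theorem lapMatrix_mulVec_eq_card_smul_iff (x : V → ℝ) :
    G.lapMatrix ℝ *ᵥ x = (Fintype.card V : ℝ) • x ↔
      Gᶜ.lapMatrix ℝ *ᵥ x = 0 ∧ ∑ v, x v = 0 := by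
  have hsum : G.lapMatrix ℝ *ᵥ x + Gᶜ.lapMatrix ℝ *ᵥ x =
      (Fintype.card V : ℝ) • x - fun _ ↦ ∑ v, x v := by
    rw [← add_mulVec, lapMatrix_add_lapMatrix_compl, lapMatrix_completeGraph_mulVec]
  constructor
  · intro hx
    have hcompl : Gᶜ.lapMatrix ℝ *ᵥ x = -fun _ ↦ ∑ v, x v := by
      rw [hx] at hsum
      linear_combination hsum
    have hs : ∑ v, x v = 0 := by
      have hnonneg := (posSemidef_lapMatrix ℝ Gᶜ).dotProduct_mulVec_nonneg x
      have hquad : star x ⬝ᵥ (Gᶜ.lapMatrix ℝ *ᵥ x) = -((∑ v, x v) * ∑ v, x v) := by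
        simp [hcompl, dotProduct, Finset.sum_mul]
      nlinarith [mul_self_nonneg (∑ v, x v)]
    exact ⟨by ext; simp [hcompl, hs], hs⟩
  · rintro ⟨hcompl, hs⟩
    simpa [hcompl, hs, ← Pi.zero_def] using hsum

variable {G}

theorem Connected.eq_zero_of_lapMatrix_mulVec_eq_zero (hG : G.Connected) {x : V → ℝ}
    (hx : G.lapMatrix ℝ *ᵥ x = 0) (hs : ∑ v, x v = 0) : x = 0 := by
  funext v
  have hconst : ∀ u, x u = x v := fun u ↦
    (lapMatrix_mulVec_eq_zero_iff_forall_reachable G).1 hx u v (hG.preconnected u v)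
  have hcard : (Fintype.card V : ℝ) ≠ 0 := by
    have := hG.nonempty
    positivity
  rw [Finset.sum_congr rfl fun u _ ↦ hconst u, Finset.sum_const, Finset.card_univ,
    nsmul_eq_mul] at hs
  exact (mul_eq_zero.1 hs).resolve_left hcard

theorem exists_ne_zero_lapMatrix_mulVec_eq_zero_of_not_preconnected (hG : ¬ G.Preconnected) :
    ∃ x ≠ 0, G.lapMatrix ℝ *ᵥ x = 0 ∧ ∑ v, x v = 0 := by
  obtain ⟨i, j, hij⟩ : ∃ i j, ¬ G.Reachable i j := by simpa [Preconnected] using hG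
  classical
  set S := Finset.univ.filter (G.Reachable i)
  refine ⟨fun v ↦ (if v ∈ S then (Fintype.card V : ℝ) else 0) - S.card, ?_, ?_, ?_⟩
  · have hS : (S.card : ℝ) ≠ 0 := by
      have : i ∈ S := by simp [S]
      exact_mod_cast (Finset.card_pos.2 ⟨i, this⟩).ne'
    intro h
    have := congrFun h j
    simp_all [S]
  · refine (lapMatrix_mulVec_eq_zero_iff_forall_adj G).2 fun u v huv ↦ ?_
    have hmem : u ∈ S ↔ v ∈ S := by
      simpa [S] using ⟨fun h ↦ h.trans huv.reachable, fun h ↦ h.trans huv.symm.reachable⟩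
    simp only [hmem]
  · simp [Finset.sum_sub_distrib, Finset.sum_ite_mem, mul_comm]

end SimpleGraph

/-- For a graph `G` on `N ≥ 2` vertices, `N` is a Laplacian eigenvalue of
`G` iff the complement graph `Gᶜ` is disconnected. -/
theorem card_isLapEigenvalue_iff_compl_disconnected {N : ℕ} (hN : 2 ≤ N)
    (G : SimpleGraph (Fin N)) :
    Module.End.HasEigenvalue (Matrix.toLin' (lapR G)) (N : ℝ) ↔ ¬ Gᶜ.Connected := by
  classical
  have : Nonempty (Fin N) := ⟨⟨0, by omega⟩⟩
  have hcard : (N : ℝ) = Fintype.card (Fin N) := by simp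
  rw [hasEigenvalue_toLin'_iff, show lapR G = G.lapMatrix ℝ from rfl, hcard]
  simp_rw [SimpleGraph.lapMatrix_mulVec_eq_card_smul_iff]
  constructor
  · rintro ⟨x, hx, hker, hs⟩ hconn
    exact hx (hconn.eq_zero_of_lapMatrix_mulVec_eq_zero hker hs)
  · intro hconn
    exact SimpleGraph.exists_ne_zero_lapMatrix_mulVec_eq_zero_of_not_preconnected
      fun h ↦ hconn (SimpleGraph.connected_iff _ |>.2 ⟨h, inferInstance⟩)
end

section
/- Let G₂ be the simple graph on vertex set {1,2,3,4,5,6} with edge set {{1,2},{1,5},{1,6},{2,3},{2,4},{3,4},{3,6},{4,5},{5,6}} (the triangular prism), and let G₂ + e{1,3} be the graph obtained by adding the edge {1,3}. Then the Laplacian eigenvalues of G₂ + e{1,3}, in nondecreasing order, are 0, 4 − √3, 3, 4, 5, 4 + √3; in particular λ₂(G₂ + e{1,3})/λ₆(G₂ + e{1,3}) = (4 − √3)/(4 + √3) < 2/5 = λ₂(G₂)/λ₆(G₂), so adding this edge strictly decreases the eigenratio. -/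
open Matrix

/-- The graph `G₂` of the paper (the triangular prism), on vertices `0, …, 5`
(labelled `1, …, 6` in the paper). -/
def G₂6 : SimpleGraph (Fin 6) :=
  SimpleGraph.fromEdgeSet
    {s(0, 1), s(0, 4), s(0, 5), s(1, 2), s(1, 3), s(2, 3), s(2, 5), s(3, 4), s(4, 5)}

/-!
Both Laplacians are diagonalised by explicit eigenvectors. The prism is `K₃ □ K₂` (triangles
`{0, 4, 5}` and `{1, 3, 2}`, matched in this order), so its eigenvectors are products of
eigenvectors of `K₃` (eigenvalues `0, 3, 3`) and of `K₂` (eigenvalues `0, 2`). The augmented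
graph has the involution `(0 2)(1 5)(3 4)`: on symmetric vectors the Laplacian has eigenvalues
`0, 3, 5`, on antisymmetric ones `4` and the roots `4 ± √3` of `x² - 8x + 13`.
In both cases the eigenvectors are pairwise orthogonal, hence a basis, so the characteristic
polynomial is `∏ (X - μᵢ)`, and this determines the sorted spectrum.
-/

open Polynomial

theorem Monotone.eq_of_multiset_map_eq {α : Type*} [LinearOrder α] {m : ℕ} {f g : Fin m → α}
    (hf : Monotone f) (hg : Monotone g)
    (h : Multiset.map f Finset.univ.val = Multiset.map g Finset.univ.val) : f = g := by
  have hperm : (List.ofFn f).Perm (List.ofFn g) := by simpa using h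
  exact List.ofFn_injective (hperm.eq_of_sortedLE hf.sortedLE_ofFn hg.sortedLE_ofFn)

namespace Matrix

variable {n : Type*} [Fintype n] [DecidableEq n]

theorem isUnit_of_mul_transpose_eq_diagonal {K : Type*} [Field K] {V : Matrix n n K}
    {w : n → K} (hw : ∀ i, w i ≠ 0) (h : V * Vᵀ = diagonal w) : IsUnit V := by
  have hdet : V.det * Vᵀ.det ≠ 0 := by
    rw [← det_mul, h, det_diagonal]
    exact Finset.prod_ne_zero_iff.2 fun i _ => hw i
  exact (isUnit_iff_isUnit_det V).2 (left_ne_zero_of_mul hdet).isUnit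

theorem mul_transpose_eq_transpose_mul_diagonal {R : Type*} [CommRing R] {A V : Matrix n n R}
    {μ : n → R} (h : ∀ k, A *ᵥ V k = μ k • V k) : A * Vᵀ = Vᵀ * diagonal μ := by
  ext i k
  rw [mul_diagonal]
  simpa [mul_apply, mulVec, dotProduct, mul_comm] using congrFun (h k) i

theorem charpoly_eq_prod_of_mul_eq_mul_diagonal {R : Type*} [CommRing R] {A P : Matrix n n R}
    {μ : n → R} (hP : IsUnit P) (h : A * P = P * diagonal μ) :
    A.charpoly = ∏ i, (X - C (μ i)) := by
  lift P to (Matrix n n R)ˣ using hP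
  have hA : A = P.val * diagonal μ * P.val⁻¹ := by
    rw [← h, mul_assoc, ← coe_units_inv, Units.mul_inv, mul_one]
  rw [hA, charpoly_units_conj, charpoly_diagonal]

end Matrix

theorem Matrix.IsHermitian.eigenvalues_comp_sort_eq {𝕜 : Type*} [RCLike 𝕜] {m : ℕ}
    {A : Matrix (Fin m) (Fin m) 𝕜} (hA : A.IsHermitian) {μ : Fin m → ℝ} (hμ : Monotone μ)
    (h : A.charpoly = ∏ i, (X - C (μ i : 𝕜))) :
    hA.eigenvalues ∘ Tuple.sort hA.eigenvalues = μ := by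
  have hroots : Multiset.map ((RCLike.ofReal : ℝ → 𝕜) ∘ hA.eigenvalues) Finset.univ.val =
      Multiset.map (RCLike.ofReal ∘ μ) Finset.univ.val := by
    rw [← hA.roots_charpoly_eq_eigenvalues, h, roots_prod _ _ (Finset.prod_ne_zero_iff.2
      fun i _ => X_sub_C_ne_zero _)]
    simp
  rw [← Multiset.map_map, ← Multiset.map_map] at hroots
  refine (Tuple.monotone_sort _).eq_of_multiset_map_eq hμ ?_
  rw [← Multiset.map_map,
    ← Multiset.map_injective (RCLike.ofReal_injective (K := 𝕜)) hroots]
  simp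

namespace SimpleGraph

theorem map_intCast_lapMatrix {V : Type*} [Fintype V] [DecidableEq V] (G : SimpleGraph V)
    [DecidableRel G.Adj] (R : Type*) [Ring R] :
    (G.lapMatrix ℤ).map (Int.cast : ℤ → R) = G.lapMatrix R := by
  ext i j
  by_cases hij : i = j <;> by_cases hadj : G.Adj i j <;>
    simp [lapMatrix, degMatrix, adjMatrix_apply, hij, hadj]

end SimpleGraph

theorem sortedLapEigs_eq_of_charpoly {N : ℕ} (G : SimpleGraph (Fin N)) [DecidableRel G.Adj]
    {μ : Fin N → ℝ} (hμ : Monotone μ)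
    (h : (G.lapMatrix ℝ).charpoly = ∏ i, (X - C (μ i))) :
    sortedLapEigs G = μ := by
  unfold sortedLapEigs
  convert (G.posSemidef_lapMatrix ℝ).isHermitian.eigenvalues_comp_sort_eq hμ h

theorem sortedLapEigs_eq_of_orthogonal_eigenvectors {N : ℕ} (G : SimpleGraph (Fin N))
    [DecidableRel G.Adj] {V : Matrix (Fin N) (Fin N) ℝ} {μ w : Fin N → ℝ} (hμ : Monotone μ)
    (hw : ∀ i, w i ≠ 0) (hV : V * Vᵀ = diagonal w)
    (heig : ∀ k, G.lapMatrix ℝ *ᵥ V k = μ k • V k) :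
    sortedLapEigs G = μ :=
  sortedLapEigs_eq_of_charpoly G hμ <| charpoly_eq_prod_of_mul_eq_mul_diagonal
    ((isUnit_transpose _).2 (isUnit_of_mul_transpose_eq_diagonal hw hV))
    (mul_transpose_eq_transpose_mul_diagonal heig)

-- Built with `delta` so that `decide` can evaluate them: `unfold`, like the `rw` in Mathlib's
-- instance for `edge`, leaves a cast that blocks reduction.
instance : DecidableRel G₂6.Adj := by delta G₂6; infer_instance

instance {V : Type*} [DecidableEq V] (s t : V) : DecidableRel (SimpleGraph.edge s t).Adj := by
  delta SimpleGraph.edge; infer_instance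

theorem lapMatrix_G₂6 : G₂6.lapMatrix ℤ =
    !![3, -1, 0, 0, -1, -1;
       -1, 3, -1, -1, 0, 0;
       0, -1, 3, -1, 0, -1;
       0, -1, -1, 3, -1, 0;
       -1, 0, 0, -1, 3, -1;
       -1, 0, -1, 0, -1, 3] := by
  decide

theorem lapMatrix_G₂6_sup_edge : (G₂6 ⊔ SimpleGraph.edge 0 2).lapMatrix ℤ =
    !![4, -1, -1, 0, -1, -1;
       -1, 3, -1, -1, 0, 0;
       -1, -1, 4, -1, 0, -1;
       0, -1, -1, 3, -1, 0;
       -1, 0, 0, -1, 3, -1;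
       -1, 0, -1, 0, -1, 3] := by
  decide

def prismEigenvectors : Matrix (Fin 6) (Fin 6) ℝ :=
  !![1, 1, 1, 1, 1, 1;
     1, -1, -1, -1, 1, 1;
     1, 1, 0, -1, -1, 0;
     1, 1, -2, 1, 1, -2;
     1, -1, 0, 1, -1, 0;
     1, -1, 2, -1, 1, -2]

theorem sortedLapEigs_G₂6 : sortedLapEigs G₂6 = ![0, 2, 3, 3, 5, 5] := by
  refine sortedLapEigs_eq_of_orthogonal_eigenvectors G₂6 (V := prismEigenvectors)
    (w := ![6, 6, 4, 12, 4, 12]) ?_ ?_ ?_ ?_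
  · exact Fin.monotone_iff_le_succ.2 fun i => by fin_cases i <;> simp <;> norm_num
  · intro i; fin_cases i <;> norm_num
  · ext i j
    fin_cases i <;> fin_cases j <;>
      simp [prismEigenvectors, mul_apply, Fin.sum_univ_six] <;> norm_num
  · intro k
    rw [← G₂6.map_intCast_lapMatrix, lapMatrix_G₂6]
    fin_cases k <;> ext i <;> fin_cases i <;>
      simp [prismEigenvectors, mulVec, dotProduct, Fin.sum_univ_six] <;> norm_num

noncomputable def prismAddEdgeEigenvectors : Matrix (Fin 6) (Fin 6) ℝ :=
  !![1, 1, 1, 1, 1, 1;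
     2 - √3, -1, -2 + √3, 1 - √3, -1 + √3, 1;
     1, 1, 1, -2, -2, 1;
     -1, -1, 1, 1, -1, 1;
     -1, 1, -1, 0, 0, 1;
     2 + √3, -1, -2 - √3, 1 + √3, -1 - √3, 1]

theorem sortedLapEigs_G₂6_sup_edge :
    sortedLapEigs (G₂6 ⊔ SimpleGraph.edge 0 2) = ![0, 4 - √3, 3, 4, 5, 4 + √3] := by
  have h3 : √3 ^ 2 = 3 := Real.sq_sqrt (by norm_num)
  have h1 : 1 < √3 := by rw [Real.lt_sqrt zero_le_one]; norm_num
  have h2 : √3 < 2 := by rw [Real.sqrt_lt' two_pos]; norm_num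
  refine sortedLapEigs_eq_of_orthogonal_eigenvectors _ (V := prismAddEdgeEigenvectors)
    (w := ![6, 24 - 12 * √3, 12, 6, 4, 24 + 12 * √3]) ?_ ?_ ?_ ?_
  · exact Fin.monotone_iff_le_succ.2 fun i => by fin_cases i <;> simp <;> linarith
  · intro i; fin_cases i <;> simp <;> linarith
  · ext i j
    fin_cases i <;> fin_cases j <;>
      simp [prismAddEdgeEigenvectors, mul_apply, Fin.sum_univ_six] <;>
      ring_nf <;> simp [h3] <;> ring
  · intro k
    rw [← SimpleGraph.map_intCast_lapMatrix, lapMatrix_G₂6_sup_edge]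
    fin_cases k <;> ext i <;> fin_cases i <;>
      simp [prismAddEdgeEigenvectors, mulVec, dotProduct, Fin.sum_univ_six] <;>
      ring_nf <;> simp [h3] <;> ring

/-- Adding the edge `{1,3}` (here `{0,2}`) to `G₂` yields a graph whose
Laplacian eigenvalues are `0, 4 - √3, 3, 4, 5, 4 + √3`, so its eigenratio
`(4 - √3)/(4 + √3)` is strictly smaller than `r(G₂) = 2/5`. -/
theorem addEdge_decreases_eigenratio :
    sortedLapEigs (G₂6 ⊔ SimpleGraph.edge 0 2) =
      ![0, 4 - Real.sqrt 3, 3, 4, 5, 4 + Real.sqrt 3] ∧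
    sortedLapEigs (G₂6 ⊔ SimpleGraph.edge 0 2) 1 /
        sortedLapEigs (G₂6 ⊔ SimpleGraph.edge 0 2) 5 =
      (4 - Real.sqrt 3) / (4 + Real.sqrt 3) ∧
    sortedLapEigs G₂6 1 / sortedLapEigs G₂6 5 = 2 / 5 ∧
    (4 - Real.sqrt 3) / (4 + Real.sqrt 3) < 2 / 5 := by
  have hratio : (4 - √3) / (4 + √3) < 2 / 5 := by
    have h : 12 / 7 < √3 := by rw [Real.lt_sqrt (by norm_num)]; norm_num
    rw [div_lt_div_iff₀ (by positivity) (by norm_num)]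
    linarith
  refine ⟨sortedLapEigs_G₂6_sup_edge, ?_, ?_, hratio⟩
  · simp [sortedLapEigs_G₂6_sup_edge]
  · simp [sortedLapEigs_G₂6]
end

section
/- Let G be a connected finite simple graph on N ≥ 2 vertices whose complement Gᶜ is disconnected, let e be a pair of distinct non-adjacent vertices of G, and let G + e be the graph obtained by adding the edge e. Then the complement of G + e is still disconnected, the largest Laplacian eigenvalue is unchanged, λ_N(G + e) = λ_N(G) = N, the second smallest Laplacian eigenvalue does not decrease, λ₂(G + e) ≥ λ₂(G), and consequently the eigenratio does not decrease: λ₂(G + e)/λ_N(G + e) ≥ λ₂(G)/λ_N(G). -/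
open Matrix Polynomial

/-!
Since `L(G) + L(Gᶜ) = N • 1 - J` with `J` the all-ones matrix and Laplacian quadratic forms are
nonnegative, `xᵀ L(G) x ≤ N ‖x‖²`, so every Laplacian eigenvalue is at most `N`. When `Gᶜ` is
disconnected, the indicator of a component of `Gᶜ`, minus its mean, is killed by `L(Gᶜ)` and by `J`,
hence is an eigenvector of `L(G)` for the eigenvalue `N`; adding an edge to `G` only shrinks `Gᶜ`,
which stays disconnected. Adding an edge also increases the quadratic form `xᵀ L x`, and by
Courant–Fischer the second smallest eigenvalue is monotone in the quadratic form.
-/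

namespace Tuple

variable {N : ℕ} {α : Type*} [LinearOrder α] (f : Fin N → α)

lemma apply_le_comp_sort {i k : Fin N} (h : (sort f).symm i ≤ k) : f i ≤ (f ∘ sort f) k := by
  simpa using monotone_sort f h

lemma comp_sort_le_apply {i k : Fin N} (h : k ≤ (sort f).symm i) : (f ∘ sort f) k ≤ f i := by
  simpa using monotone_sort f h

end Tuple

namespace Matrix.IsHermitian

section

variable {n : Type*} [Fintype n] [DecidableEq n] {A : Matrix n n ℝ} (hA : A.IsHermitian)

lemma dotProduct_eigenvectorBasis (i j : n) :
    (hA.eigenvectorBasis i).ofLp ⬝ᵥ (hA.eigenvectorBasis j).ofLp = if i = j then 1 else 0 := by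
  have := orthonormal_iff_ite.mp hA.eigenvectorBasis.orthonormal j i
  rw [EuclideanSpace.inner_eq_star_dotProduct, star_trivial] at this
  simpa only [eq_comm] using this

lemma dotProduct_self_eq_sum_sq (x : n → ℝ) :
    x ⬝ᵥ x = ∑ i, ((hA.eigenvectorBasis i).ofLp ⬝ᵥ x) ^ 2 := by
  have := hA.eigenvectorBasis.sum_inner_mul_inner (WithLp.toLp 2 x) (WithLp.toLp 2 x)
  simp only [EuclideanSpace.inner_eq_star_dotProduct, star_trivial] at this
  simp [← this, sq, dotProduct_comm x]

lemma dotProduct_mulVec_eq_sum (x : n → ℝ) :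
    x ⬝ᵥ (A *ᵥ x) = ∑ i, hA.eigenvalues i * ((hA.eigenvectorBasis i).ofLp ⬝ᵥ x) ^ 2 := by
  have := hA.eigenvectorBasis.sum_inner_mul_inner (WithLp.toLp 2 x) (WithLp.toLp 2 (A *ᵥ x))
  simp only [EuclideanSpace.inner_eq_star_dotProduct, star_trivial] at this
  rw [dotProduct_comm, ← this]
  refine Finset.sum_congr rfl fun i _ => ?_
  have hsymm : (A *ᵥ x) ⬝ᵥ (hA.eigenvectorBasis i).ofLp
      = x ⬝ᵥ (A *ᵥ (hA.eigenvectorBasis i).ofLp) := by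
    rw [dotProduct_mulVec, ← mulVec_transpose, ← conjTranspose_eq_transpose_of_trivial, hA.eq,
      dotProduct_comm]
  rw [hsymm, hA.mulVec_eigenvectorBasis, dotProduct_smul, smul_eq_mul, dotProduct_comm x]
  ring

lemma mul_dotProduct_self_le_dotProduct_mulVec {x : n → ℝ} {m : ℝ}
    (hm : ∀ i, (hA.eigenvectorBasis i).ofLp ⬝ᵥ x ≠ 0 → m ≤ hA.eigenvalues i) :
    m * (x ⬝ᵥ x) ≤ x ⬝ᵥ (A *ᵥ x) := by
  rw [hA.dotProduct_self_eq_sum_sq, hA.dotProduct_mulVec_eq_sum, Finset.mul_sum]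
  refine Finset.sum_le_sum fun i _ => ?_
  by_cases hi : (hA.eigenvectorBasis i).ofLp ⬝ᵥ x = 0
  · simp [hi]
  · exact mul_le_mul_of_nonneg_right (hm i hi) (sq_nonneg _)

lemma dotProduct_mulVec_le_mul_dotProduct_self {x : n → ℝ} {m : ℝ}
    (hm : ∀ i, (hA.eigenvectorBasis i).ofLp ⬝ᵥ x ≠ 0 → hA.eigenvalues i ≤ m) :
    x ⬝ᵥ (A *ᵥ x) ≤ m * (x ⬝ᵥ x) := by
  rw [hA.dotProduct_self_eq_sum_sq, hA.dotProduct_mulVec_eq_sum, Finset.mul_sum]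
  refine Finset.sum_le_sum fun i _ => ?_
  by_cases hi : (hA.eigenvectorBasis i).ofLp ⬝ᵥ x = 0
  · simp [hi]
  · exact mul_le_mul_of_nonneg_right (hm i hi) (sq_nonneg _)

lemma eigenvalues_le_of_forall_dotProduct_mulVec_le {m : ℝ}
    (h : ∀ x, x ⬝ᵥ (A *ᵥ x) ≤ m * (x ⬝ᵥ x)) (i : n) : hA.eigenvalues i ≤ m := by
  have := h (hA.eigenvectorBasis i).ofLp
  rwa [hA.mulVec_eigenvectorBasis, dotProduct_smul, smul_eq_mul, hA.dotProduct_eigenvectorBasis,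
    if_pos rfl, mul_one, mul_one] at this

lemma exists_eigenvalues_eq_of_mulVec_eq_smul {x : n → ℝ} {c : ℝ} (hx : x ≠ 0)
    (h : A *ᵥ x = c • x) : ∃ i, hA.eigenvalues i = c := by
  have hc : Module.End.HasEigenvalue (toLin' A) c :=
    Module.End.hasEigenvalue_of_hasEigenvector ⟨Module.End.mem_eigenspace_iff.mpr h, hx⟩
  have := hc.mem_spectrum
  rwa [spectrum_toLin', hA.spectrum_real_eq_range_eigenvalues] at this

lemma exists_ne_zero_dotProduct_eq_zero_of_pair (w : n → ℝ) {p q : n} (hpq : p ≠ q) :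
    ∃ x : n → ℝ, x ≠ 0 ∧ w ⬝ᵥ x = 0 ∧
      ∀ i, i ≠ p → i ≠ q → (hA.eigenvectorBasis i).ofLp ⬝ᵥ x = 0 := by
  set e := fun i => (hA.eigenvectorBasis i).ofLp
  have he (i j : n) : e i ⬝ᵥ e j = if i = j then 1 else 0 := hA.dotProduct_eigenvectorBasis i j
  by_cases hp : w ⬝ᵥ e p = 0
  · refine ⟨e p, fun h => ?_, hp, fun i hip _ => by rw [he, if_neg hip]⟩
    simpa [h] using he p p
  · refine ⟨(w ⬝ᵥ e q) • e p - (w ⬝ᵥ e p) • e q, fun h => hp ?_, ?_, fun i hip hiq => ?_⟩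
    · simpa [dotProduct_sub, dotProduct_smul, he, hpq.symm] using congrArg (e q ⬝ᵥ ·) h
    · simp only [dotProduct_sub, dotProduct_smul, smul_eq_mul]
      ring
    · show e i ⬝ᵥ _ = 0
      simp [dotProduct_sub, dotProduct_smul, he, hip, hiq]

end

variable {N : ℕ} {A B : Matrix (Fin N) (Fin N) ℝ} (hA : A.IsHermitian) (hB : B.IsHermitian)

noncomputable def sortedEigenvalues : Fin N → ℝ :=
  hA.eigenvalues ∘ Tuple.sort hA.eigenvalues

lemma sortedEigenvalues_last_eq {c : ℝ} (hN : 0 < N) (hle : ∀ i, hA.eigenvalues i ≤ c)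
    (hc : ∃ i, hA.eigenvalues i = c) : hA.sortedEigenvalues ⟨N - 1, by omega⟩ = c := by
  obtain ⟨i, rfl⟩ := hc
  exact le_antisymm (hle _) (Tuple.apply_le_comp_sort _ (Nat.le_sub_one_of_lt (Fin.is_lt _)))

lemma sortedEigenvalues_one_mul_le {x : Fin N → ℝ} (hN : 1 < N)
    (hx : (hA.eigenvectorBasis (Tuple.sort hA.eigenvalues ⟨0, by omega⟩)).ofLp ⬝ᵥ x = 0) :
    hA.sortedEigenvalues ⟨1, hN⟩ * (x ⬝ᵥ x) ≤ x ⬝ᵥ (A *ᵥ x) := by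
  refine hA.mul_dotProduct_self_le_dotProduct_mulVec fun i hi => Tuple.comp_sort_le_apply _ ?_
  have hi0 : (Tuple.sort hA.eigenvalues).symm i ≠ ⟨0, by omega⟩ := fun h =>
    hi (by rwa [← h, Equiv.apply_symm_apply] at hx)
  rw [Fin.le_def]
  exact Nat.one_le_iff_ne_zero.mpr fun h0 => hi0 (Fin.ext h0)

lemma dotProduct_mulVec_le_sortedEigenvalues_one {x : Fin N → ℝ} (hN : 1 < N)
    (hx : ∀ i, i ≠ Tuple.sort hA.eigenvalues ⟨0, by omega⟩ → i ≠ Tuple.sort hA.eigenvalues ⟨1, hN⟩ →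
      (hA.eigenvectorBasis i).ofLp ⬝ᵥ x = 0) :
    x ⬝ᵥ (A *ᵥ x) ≤ hA.sortedEigenvalues ⟨1, hN⟩ * (x ⬝ᵥ x) := by
  refine hA.dotProduct_mulVec_le_mul_dotProduct_self fun i hi => Tuple.apply_le_comp_sort _ ?_
  obtain ⟨k, rfl⟩ := (Tuple.sort hA.eigenvalues).surjective i
  rw [Equiv.symm_apply_apply, Fin.le_def]
  by_contra hk
  refine hi (hx _ ((Tuple.sort _).injective.ne ?_) ((Tuple.sort _).injective.ne ?_)) <;>
    · rw [Ne, Fin.ext_iff]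
      simp only at hk ⊢
      omega

theorem sortedEigenvalues_one_le (hN : 1 < N)
    (hAB : ∀ x, x ⬝ᵥ (A *ᵥ x) ≤ x ⬝ᵥ (B *ᵥ x)) :
    hA.sortedEigenvalues ⟨1, hN⟩ ≤ hB.sortedEigenvalues ⟨1, hN⟩ := by
  have h01 : (⟨0, by omega⟩ : Fin N) ≠ ⟨1, hN⟩ := by simp
  -- Courant–Fischer: `x` lies in the span of the two lowest eigenvectors of `B` and is orthogonal
  -- to the lowest eigenvector of `A`.
  obtain ⟨x, hx0, hxA, hxB⟩ := hB.exists_ne_zero_dotProduct_eq_zero_of_pair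
    (hA.eigenvectorBasis (Tuple.sort hA.eigenvalues ⟨0, by omega⟩)).ofLp
    ((Tuple.sort hB.eigenvalues).injective.ne h01)
  have hpos : 0 < x ⬝ᵥ x := by simpa using dotProduct_self_star_pos_iff.mpr hx0
  refine le_of_mul_le_mul_right ?_ hpos
  calc _ ≤ x ⬝ᵥ (A *ᵥ x) := hA.sortedEigenvalues_one_mul_le hN hxA
    _ ≤ x ⬝ᵥ (B *ᵥ x) := hAB x
    _ ≤ _ := hB.dotProduct_mulVec_le_sortedEigenvalues_one hN hxB

end Matrix.IsHermitian

namespace SimpleGraph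

variable {N : ℕ}

lemma isHermitian_lapR (G : SimpleGraph (Fin N)) : (lapR G).IsHermitian :=
  letI := Classical.decRel G.Adj
  (posSemidef_lapMatrix ℝ G).isHermitian

lemma lapR_mulVec_one (G : SimpleGraph (Fin N)) : lapR G *ᵥ (fun _ => 1) = 0 :=
  letI := Classical.decRel G.Adj
  lapMatrix_mulVec_const_eq_zero G

lemma lapR_mulVec_eq_zero_iff {G : SimpleGraph (Fin N)} {x : Fin N → ℝ} :
    lapR G *ᵥ x = 0 ↔ ∀ i j, G.Reachable i j → x i = x j :=
  letI := Classical.decRel G.Adj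
  lapMatrix_mulVec_eq_zero_iff_forall_reachable G

open Classical in
lemma dotProduct_lapR_mulVec (G : SimpleGraph (Fin N)) (x : Fin N → ℝ) :
    x ⬝ᵥ (lapR G *ᵥ x) = (∑ i, ∑ j, if G.Adj i j then (x i - x j) ^ 2 else 0) / 2 := by
  rw [← lapMatrix_toLinearMap₂' ℝ G x, toLinearMap₂'_apply']
  rfl

lemma dotProduct_lapR_mulVec_mono {G H : SimpleGraph (Fin N)} (h : G ≤ H) (x : Fin N → ℝ) :
    x ⬝ᵥ (lapR G *ᵥ x) ≤ x ⬝ᵥ (lapR H *ᵥ x) := by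
  rw [dotProduct_lapR_mulVec, dotProduct_lapR_mulVec]
  gcongr with i _ j _
  split_ifs with hG hH hH
  exacts [le_rfl, absurd (h hG) hH, by positivity, le_rfl]

lemma lapR_add_lapR_compl (G : SimpleGraph (Fin N)) :
    lapR G + lapR Gᶜ = (N : ℝ) • 1 - of fun _ _ => 1 := by
  classical
  ext i j
  by_cases hij : i = j
  · subst hij
    have hdeg := G.degree_lt_card_verts i
    rw [Fintype.card_fin] at hdeg
    simp only [lapR, lapMatrix, degMatrix, degree_compl, Fintype.card_fin, Matrix.add_apply,
      Matrix.sub_apply, diagonal_apply_eq, adjMatrix_apply, SimpleGraph.irrefl, ↓reduceIte,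
      sub_zero, Matrix.smul_apply, one_apply_eq, smul_eq_mul, mul_one, of_apply]
    rw [← Nat.cast_add, Nat.add_sub_cancel' (by omega), Nat.cast_pred (by omega)]
  · by_cases hadj : G.Adj i j <;> simp [lapR, lapMatrix, degMatrix, hij, hadj]

lemma dotProduct_lapR_mulVec_le (G : SimpleGraph (Fin N)) (x : Fin N → ℝ) :
    x ⬝ᵥ (lapR G *ᵥ x) ≤ N * (x ⬝ᵥ x) := by
  have hJ : x ⬝ᵥ ((of fun _ _ => (1 : ℝ)) *ᵥ x) = (∑ i, x i) ^ 2 := by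
    simp [mulVec, dotProduct, sq, Finset.sum_mul]
  have hGc : 0 ≤ x ⬝ᵥ (lapR Gᶜ *ᵥ x) := by
    rw [dotProduct_lapR_mulVec]
    positivity
  have hsum := congrArg (x ⬝ᵥ · *ᵥ x) (lapR_add_lapR_compl G)
  simp only [add_mulVec, sub_mulVec, dotProduct_add, dotProduct_sub, smul_mulVec, one_mulVec,
    dotProduct_smul, smul_eq_mul, hJ] at hsum
  nlinarith [sq_nonneg (∑ i, x i)]

lemma exists_lapR_mulVec_eq_card_smul {G : SimpleGraph (Fin N)} (hGc : ¬ Gᶜ.Preconnected) :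
    ∃ x, x ≠ 0 ∧ lapR G *ᵥ x = (N : ℝ) • x := by
  classical
  obtain ⟨a, b, hab⟩ : ∃ a b, ¬ Gᶜ.Reachable a b := by simpa [Preconnected] using hGc
  set y : Fin N → ℝ := fun w => if Gᶜ.Reachable a w then 1 else 0
  have hy : lapR Gᶜ *ᵥ y = 0 := by
    refine lapR_mulVec_eq_zero_iff.mpr fun i j hij => ?_
    have : Gᶜ.Reachable a i ↔ Gᶜ.Reachable a j := ⟨(·.trans hij), (·.trans hij.symm)⟩
    simp only [y, this]
  have hN : (N : ℝ) ≠ 0 := Nat.cast_ne_zero.mpr a.pos.ne'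
  refine ⟨y - ((∑ i, y i) / N) • fun _ => 1, fun h => ?_, ?_⟩
  · have ha := congrFun h a
    have hb := congrFun h b
    simp only [y, Pi.sub_apply, Pi.smul_apply, Pi.zero_apply, Reachable.refl, hab, if_true,
      if_false] at ha hb
    linarith
  · have hL : lapR G = (N : ℝ) • 1 - (of fun _ _ => 1) - lapR Gᶜ :=
      eq_sub_of_add_eq (lapR_add_lapR_compl G)
    rw [mulVec_sub, mulVec_smul, lapR_mulVec_one, smul_zero, sub_zero, hL, sub_mulVec, sub_mulVec,
      hy, sub_zero, smul_mulVec, one_mulVec]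
    ext i
    simp only [Pi.sub_apply, Pi.smul_apply, smul_eq_mul, mulVec, dotProduct, of_apply, one_mul,
      mul_one]
    field_simp

lemma sortedLapEigs_last_eq_card {G : SimpleGraph (Fin N)} (hN : 0 < N)
    (hGc : ¬ Gᶜ.Preconnected) : sortedLapEigs G ⟨N - 1, by omega⟩ = N := by
  have hL := isHermitian_lapR G
  obtain ⟨x, hx, hLx⟩ := exists_lapR_mulVec_eq_card_smul hGc
  exact hL.sortedEigenvalues_last_eq hN
    (hL.eigenvalues_le_of_forall_dotProduct_mulVec_le (dotProduct_lapR_mulVec_le G))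
    (hL.exists_eigenvalues_eq_of_mulVec_eq_smul hx hLx)

lemma sortedLapEigs_one_mono {G H : SimpleGraph (Fin N)} (hN : 1 < N) (h : G ≤ H) :
    sortedLapEigs G ⟨1, hN⟩ ≤ sortedLapEigs H ⟨1, hN⟩ :=
  (isHermitian_lapR G).sortedEigenvalues_one_le (isHermitian_lapR H) hN
    (dotProduct_lapR_mulVec_mono h)

end SimpleGraph

/-- If `G` is connected on `N ≥ 2` vertices with disconnected complement,
then after adding any missing edge `e`, the complement of `G + e` is still disconnected,
the largest Laplacian eigenvalue stays equal to `N`, the second smallest Laplacian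
eigenvalue does not decrease, and hence the eigenratio does not decrease. -/
theorem addEdge_of_disconnected_compl {N : ℕ} (hN : 2 ≤ N) (G : SimpleGraph (Fin N))
    (hGc : ¬ Gᶜ.Connected)
    (u v : Fin N) :
    ¬ (G ⊔ SimpleGraph.edge u v)ᶜ.Connected ∧
    sortedLapEigs (G ⊔ SimpleGraph.edge u v) ⟨N - 1, by omega⟩ = N ∧
    sortedLapEigs G ⟨N - 1, by omega⟩ = N ∧
    sortedLapEigs G ⟨1, by omega⟩ ≤
      sortedLapEigs (G ⊔ SimpleGraph.edge u v) ⟨1, by omega⟩ ∧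
    sortedLapEigs G ⟨1, by omega⟩ / sortedLapEigs G ⟨N - 1, by omega⟩ ≤
      sortedLapEigs (G ⊔ SimpleGraph.edge u v) ⟨1, by omega⟩ /
        sortedLapEigs (G ⊔ SimpleGraph.edge u v) ⟨N - 1, by omega⟩ := by
  have hGH : G ≤ G ⊔ SimpleGraph.edge u v := le_sup_left
  have hGc' : ¬ Gᶜ.Preconnected := fun h => hGc ((SimpleGraph.connected_iff _).mpr ⟨h, ⟨u⟩⟩)
  have hHc : ¬ (G ⊔ SimpleGraph.edge u v)ᶜ.Preconnected := fun h =>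
    hGc' (h.mono (compl_le_compl hGH))
  have hlastG := SimpleGraph.sortedLapEigs_last_eq_card (by omega) hGc'
  have hlastH := SimpleGraph.sortedLapEigs_last_eq_card (by omega) hHc
  have hsecond := SimpleGraph.sortedLapEigs_one_mono (by omega) hGH
  refine ⟨fun h => hHc h.preconnected, hlastH, hlastG, hsecond, ?_⟩
  rw [hlastG, hlastH]
  gcongr
end
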